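/- Hausdorff limits and dynamic sets, direct part (Lemma 2.2(1)): Let (g_n) be a sequence of homeomorphisms of a nonempty compact metric space (M,d), and let K ⊆ M be a nonempty compact subset such that the compact sets g_n(K) converge, in the Hausdorff distance d_H, to a compact set K∞. Then ⋃_{x ∈ int(K)} D_{(g_n)}(x) ⊆ K∞ ⊆ ⋃_{x ∈ K} D_{(g_n)}(x). -/
import Mathlib


open Filter Topology Set

/-- The dynamic set of a point `x` under a sequence of maps `g n`: all limits of
`g (n k) (x k)` for a strictly increasing sequence `(n k)` and a sequence `x k → x`. -/
def DynSet {M : Type*} [TopologicalSpace M] (g : ℕ → M → M) (x : M) : Set M :=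
  {y | ∃ φ : ℕ → ℕ, StrictMono φ ∧ ∃ u : ℕ → M,
    Tendsto u atTop (nhds x) ∧ Tendsto (fun k => g (φ k) (u k)) atTop (nhds y)}

/-- Lemma 2.2(1): if `(g n)` is a sequence of homeomorphisms of a nonempty compact
metric space and `g n '' K` converges to a (nonempty) compact `K∞` in the Hausdorff
distance, then `⋃_{x ∈ int K} D(x) ⊆ K∞ ⊆ ⋃_{x ∈ K} D(x)`. -/
theorem hausdorff_limit_and_dynSets
    {M : Type*} [MetricSpace M] [CompactSpace M] [Nonempty M]
    (g : ℕ → M ≃ₜ M) (K : Set M) (hKc : IsCompact K) (hKne : K.Nonempty)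
    (Kinf : Set M) (hKinfc : IsCompact Kinf) (hKinfne : Kinf.Nonempty)
    (hconv : Tendsto (fun n => Metric.hausdorffDist (⇑(g n) '' K) Kinf) atTop (nhds 0)) :
    (⋃ x ∈ interior K, DynSet (fun n => ⇑(g n)) x) ⊆ Kinf ∧
      Kinf ⊆ ⋃ x ∈ K, DynSet (fun n => ⇑(g n)) x := by
  have hfin : ∀ n, EMetric.hausdorffEdist (⇑(g n) '' K) Kinf ≠ ⊤ := fun n =>
    Metric.hausdorffEdist_ne_top_of_nonempty_of_bounded (hKne.image _) hKinfne
      ((hKc.image (g n).continuous).isBounded) hKinfc.isBounded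
  constructor
  · intro y hy
    simp only [mem_iUnion] at hy
    obtain ⟨x, hx, φ, hφ, u, hu, hgu⟩ := hy
    -- eventually u k ∈ K
    have hmem : ∀ᶠ k in atTop, u k ∈ K := hu (mem_interior_iff_mem_nhds.mp hx)
    have key : Tendsto (fun k => Metric.infDist (g (φ k) (u k)) Kinf) atTop (nhds 0) := by
      have h1 : Tendsto (fun k => Metric.hausdorffDist (⇑(g (φ k)) '' K) Kinf) atTop (nhds 0) :=
        hconv.comp hφ.tendsto_atTop
      refine squeeze_zero' (Eventually.of_forall fun k => Metric.infDist_nonneg) ?_ h1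
      filter_upwards [hmem] with k hk
      exact Metric.infDist_le_hausdorffDist_of_mem (mem_image_of_mem _ hk) (hfin (φ k))
    have hcont : Tendsto (fun k => Metric.infDist (g (φ k) (u k)) Kinf) atTop
        (nhds (Metric.infDist y Kinf)) :=
      ((Metric.continuous_infDist_pt Kinf).tendsto y).comp hgu
    have : Metric.infDist y Kinf = 0 := tendsto_nhds_unique hcont key
    exact (hKinfc.isClosed.mem_iff_infDist_zero hKinfne).mpr this
  · intro y hy
    -- choose w n ∈ K with dist y (g n (w n)) = infDist y (g n '' K)
    have hchoice : ∀ n : ℕ, ∃ w ∈ K, dist y (g n w) = Metric.infDist y (⇑(g n) '' K) := by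
      intro n
      obtain ⟨z, hz, hzd⟩ := (hKc.image (g n).continuous).exists_infDist_eq_dist
        (hKne.image _) y
      obtain ⟨w, hw, rfl⟩ := hz
      exact ⟨w, hw, hzd.symm⟩
    choose w hwK hwd using hchoice
    obtain ⟨x, hxK, φ, hφ, hwx⟩ := hKc.tendsto_subseq hwK
    refine mem_iUnion.mpr ⟨x, mem_iUnion.mpr ⟨hxK, φ, hφ, fun k => w (φ k), hwx, ?_⟩⟩
    have hd : Tendsto (fun k => dist y (g (φ k) (w (φ k)))) atTop (nhds 0) := by
      have h1 : Tendsto (fun k => Metric.hausdorffDist (⇑(g (φ k)) '' K) Kinf) atTop (nhds 0) :=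
        hconv.comp hφ.tendsto_atTop
      refine squeeze_zero' (Eventually.of_forall fun k => dist_nonneg) ?_ h1
      refine Eventually.of_forall fun k => ?_
      rw [hwd]
      rw [Metric.hausdorffDist_comm]
      exact Metric.infDist_le_hausdorffDist_of_mem hy
        (by rw [EMetric.hausdorffEdist_comm]; exact hfin (φ k))
    rw [tendsto_iff_dist_tendsto_zero]
    simpa [dist_comm] using hd
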